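/- Let (ℓₙ) be a nonincreasing sequence of positive reals converging to 0, and suppose that the random limsup set E_{(1/n)} = limsupₙ A(Xₙ, 1/n) has full Lebesgue measure in 𝕋 (which holds almost surely). Then the set E_ℓ = limsupₙ A(Xₙ, ℓₙ) is nonempty. -/

import Mathlib

open MeasureTheory ProbabilityTheory Filter Set

/-- The circle `𝕋 = ℝ/ℤ`. -/
abbrev Circle1 := AddCircle (1:ℝ)

/-- The open arc of center `x` and length `l`. -/
def arc (x : Circle1) (l : ℝ) : Set Circle1 := Metric.ball x (l/2)

/-- The limsup set `⋂_N ⋃_{n ≥ N} A(xₙ, ℓₙ)`. -/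
def limsupArcs (x : ℕ → Circle1) (ℓ : ℕ → ℝ) : Set Circle1 :=
  ⋂ N, ⋃ n, ⋃ (_ : n ≥ N), arc (x n) (ℓ n)

/-!
Full measure makes each open set `⋃_{n ≥ N} A(Xₙ, 1/n)` dense. Since `ℓₙ ≤ 1/n` and `1/n → 0`,
any closed ball `B(Xₘ, ℓₘ/4)` therefore contains a closed ball `B(Xₙ, ℓₙ/4)` with `n > m`.
Iterating produces a nested sequence of compact balls; a point of their intersection lies in
`B(Xₙ, ℓₙ/4) ⊆ A(Xₙ, ℓₙ)` for infinitely many `n`.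
-/

open Metric

instance : IsProbabilityMeasure (volume : Measure Circle1) :=
  ⟨by simp [AddCircle.measure_univ]⟩

theorem Dense.of_measure_eq_one {α : Type*} [TopologicalSpace α] [MeasurableSpace α]
    {μ : Measure α} [IsProbabilityMeasure μ] [μ.IsOpenPosMeasure] {U : Set α}
    (hU : MeasurableSet U) (h : μ U = 1) : Dense U :=
  Measure.dense_of_ae ((mem_ae_iff_prob_eq_one hU).2 h)

theorem exists_frequently_mem_of_forall_exists_subset {α : Type*} [TopologicalSpace α]
    [CompactSpace α] {K : ℕ → Set α} (hclosed : ∀ n, IsClosed (K n))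
    (hne : ∀ n, (K n).Nonempty) (hstep : ∀ m, ∃ n > m, K n ⊆ K m) :
    ∃ x, ∃ᶠ n in atTop, x ∈ K n := by
  choose f hf_gt hf_sub using hstep
  set a : ℕ → ℕ := fun k => f^[k] 0
  have ha_succ : ∀ k, a (k + 1) = f (a k) := fun k => Function.iterate_succ_apply' f k 0
  have ha : StrictMono a := strictMono_nat_of_lt_succ fun k => ha_succ k ▸ hf_gt (a k)
  obtain ⟨x, hx⟩ := IsCompact.nonempty_iInter_of_sequence_nonempty_isCompact_isClosed
    (fun k => K (a k)) (fun k => ha_succ k ▸ hf_sub (a k)) (fun k => hne (a k))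
    (hclosed (a 0)).isCompact (fun k => hclosed (a k))
  exact ⟨x, ha.tendsto_atTop.frequently (Frequently.of_forall (mem_iInter.1 hx))⟩

theorem exists_closedBall_subset_closedBall_of_dense_iUnion_ball {α : Type*}
    [PseudoMetricSpace α] {X : ℕ → α} {ρ r : ℕ → ℝ} (hρ : Tendsto ρ atTop (nhds 0))
    (hr : ∀ᶠ n in atTop, r n ≤ ρ n) (hdense : ∀ N, Dense (⋃ n ≥ N, ball (X n) (ρ n)))
    (x : α) {ε : ℝ} (hε : 0 < ε) (N : ℕ) :
    ∃ n ≥ N, closedBall (X n) (r n) ⊆ closedBall x ε := by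
  obtain ⟨N', hN'⟩ := eventually_atTop.1 <|
    (hρ.eventually (gt_mem_nhds (by positivity : (0 : ℝ) < ε / 3))).and
      (hr.and (eventually_ge_atTop N))
  obtain ⟨z, hzx, hz⟩ := (hdense N').inter_open_nonempty (ball x (ε / 3)) isOpen_ball
    (nonempty_ball.2 (by positivity))
  simp only [mem_iUnion] at hz
  obtain ⟨n, hn, hzn⟩ := hz
  obtain ⟨hρn, hrn, hNn⟩ := hN' n hn
  refine ⟨n, hNn, fun w hw => ?_⟩
  rw [mem_closedBall] at hw ⊢
  rw [mem_ball] at hzx hzn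
  calc dist w x ≤ dist w (X n) + dist (X n) z + dist z x := dist_triangle4 _ _ _ _
    _ ≤ ε := by rw [dist_comm (X n)]; linarith

theorem mem_limsupArcs_iff {x : ℕ → Circle1} {ℓ : ℕ → ℝ} {y : Circle1} :
    y ∈ limsupArcs x ℓ ↔ ∃ᶠ n in atTop, y ∈ arc (x n) (ℓ n) := by
  simp [limsupArcs, frequently_atTop]

theorem stmt9_general (ℓ : ℕ → ℝ) (hpos : ∀ n, 0 < ℓ n) (X : ℕ → Circle1)
    (hfull : ∀ N : ℕ, volume (⋃ n, ⋃ (_ : n ≥ N), arc (X n) (1 / (n:ℝ))) = 1)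
    (hsmall : ∃ N₀ : ℕ, 1 ≤ N₀ ∧ ∀ n ≥ N₀, ℓ n ≤ 1 / (n:ℝ)) :
    (limsupArcs X ℓ).Nonempty := by
  obtain ⟨N₀, -, hN₀⟩ := hsmall
  have hdense (N : ℕ) : Dense (⋃ n ≥ N, ball (X n) (1 / (n:ℝ) / 2)) :=
    .of_measure_eq_one (.iUnion fun _ => .iUnion fun _ => measurableSet_ball) (hfull N)
  have hρ : Tendsto (fun n : ℕ => 1 / (n:ℝ) / 2) atTop (nhds 0) := by
    simpa only [zero_div] using (tendsto_one_div_atTop_nhds_zero_nat (𝕜 := ℝ)).div_const 2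
  have hr : ∀ᶠ n in atTop, ℓ n / 4 ≤ 1 / (n:ℝ) / 2 :=
    eventually_atTop.2 ⟨N₀, fun n hn => by linarith [hN₀ n hn, hpos n]⟩
  have hstep (m : ℕ) : ∃ n > m, closedBall (X n) (ℓ n / 4) ⊆ closedBall (X m) (ℓ m / 4) :=
    exists_closedBall_subset_closedBall_of_dense_iUnion_ball hρ hr hdense (X m)
      (by linarith [hpos m]) (m + 1)
  obtain ⟨x, hx⟩ := exists_frequently_mem_of_forall_exists_subset
    (fun n => isClosed_closedBall) (fun n => nonempty_closedBall.2 (by linarith [hpos n])) hstep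
  exact ⟨x, mem_limsupArcs_iff.2 <| hx.mono fun n hn =>
    closedBall_subset_ball (by linarith [hpos n]) hn⟩

/-- If `⋃_{n ≥ N} A(Xₙ, 1/n)` has full measure for every `N` and `ℓₙ ≤ 1/n`
eventually, then `E_ℓ = limsupₙ A(Xₙ, ℓₙ)` is nonempty. -/
theorem stmt9 (ℓ : ℕ → ℝ) (hpos : ∀ n, 0 < ℓ n) (hmono : Antitone ℓ)
    (hlim : Tendsto ℓ atTop (nhds 0)) (X : ℕ → Circle1)
    (hfull : ∀ N : ℕ, volume (⋃ n, ⋃ (_ : n ≥ N), arc (X n) (1 / (n:ℝ))) = 1)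
    (hsmall : ∃ N₀ : ℕ, 1 ≤ N₀ ∧ ∀ n ≥ N₀, ℓ n ≤ 1 / (n:ℝ)) :
    (limsupArcs X ℓ).Nonempty :=
  stmt9_general ℓ hpos X hfull hsmall
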